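/- arXiv:0903.1832 — 2 statements merged into one kernel-verified Lean document; each statement's English description precedes it below -/
import Mathlib

section
/- Let X^{(a)}, a ∈ ℕ, be irreducible positive recurrent Markov chains on countable state spaces 𝒜_a with distinguished state ℓ ∈ 𝒜_a and subset H_a ⊂ 𝒜_a. Then for all s, t > 0 and every a, the following two inequalities hold: P( S^{(a)} > s+t , S̃^{(a)}_s ≤ s+β_a ) ≥ P( S^{(a)} > s+β_a , S̃^{(a)}_s ≤ s+β_a ) · P( S^{(a)} > t ), and P( S^{(a)} > s+t , S̃^{(a)}_s ≤ s+β_a ) ≤ P( S^{(a)} > s ) · P( S^{(a)} > t−β_a ). -/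
/-!
Write `T` for the first positive time at which the chain started at `ℓ` visits `H`, and `R` for
its first visit to `ℓ` at or after time `w₁ = s E`, where `E` is the mean of `T`. For
`w ≥ w₂ = (s + β) E`, splitting `{T > w, R ≤ w₂}` according to the value `r ∈ [w₁, w₂]` of `R`
and applying the Markov property at the fixed time `r`, at which the chain sits at `ℓ`, gives
`P(T > w, R ≤ w₂) = ∑ r, P(R = r, T > r) P(T > w - r)`. For `w₁ ≤ r ≤ w₂` the last factor lies
between `P(T > w - w₁)` and `P(T > w - w₂)`, and `∑ r, P(R = r, T > r) ≤ P(T > w₁)`; this gives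
both inequalities.

The σ-algebra on the state space is arbitrary, so `H` and `{ℓ}` need not be measurable and the
laws are evaluated on such events as outer measures. Measurable sets of paths are unions of
classes of coordinatewise atom-equivalence, so replacing `H` by the union of the measurable atoms
it contains and `ℓ` by its atom changes none of these outer measures; the Markov property for
events depending on finitely many times then follows from the cylinder identity `MC.markov` by
decomposing such events into cylinders of atoms.
-/

open MeasureTheory Filter Topology ENNReal ProbabilityTheory

noncomputable section

/-- First time `t ≥ 0` at which the path `ω` visits the set `A`,
with value `⊤` if the path never visits `A`. -/
def hitTime {S : Type*} (A : Set S) (ω : ℕ → S) : ℝ≥0∞ :=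
  ⨅ (t : ℕ) (_ : ω t ∈ A), (t : ℝ≥0∞)

/-- First time `t > 0` at which the path `ω` visits the set `A`. -/
def hitTimePos {S : Type*} (A : Set S) (ω : ℕ → S) : ℝ≥0∞ :=
  ⨅ (t : ℕ) (_ : 0 < t) (_ : ω t ∈ A), (t : ℝ≥0∞)

/-- First time `t ≥ r` at which the path `ω` visits the set `A`. -/
def hitTimeAfter {S : Type*} (A : Set S) (r : ℝ≥0∞) (ω : ℕ → S) : ℝ≥0∞ :=
  ⨅ (t : ℕ) (_ : r ≤ (t : ℝ≥0∞)) (_ : ω t ∈ A), (t : ℝ≥0∞)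

/-- A discrete-time Markov chain on a (countable) state space `S`, given by its
transition probabilities `P u v` and by the laws `law x` of the chain started at `x`
on path space `ℕ → S` (characterized by the cylinder/Markov property `markov`). -/
structure MC (S : Type*) [MeasurableSpace S] where
  P : S → S → ℝ
  law : S → Measure (ℕ → S)
  prob : ∀ x, IsProbabilityMeasure (law x)
  nonneg : ∀ x y, 0 ≤ P x y
  rowsum : ∀ x, ∑' y, P x y = 1
  init : ∀ x, law x {ω | ω 0 = x} = 1
  markov : ∀ (x : S) (u : ℕ → S) (n : ℕ),
    law x {ω | ∀ i ≤ n + 1, ω i = u i}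
      = law x {ω | ∀ i ≤ n, ω i = u i} * ENNReal.ofReal (P (u n) (u (n + 1)))

/-- Irreducibility: any state can be reached from any other through a path of
positive-probability steps. -/
def MC.Irreducible {S : Type*} [MeasurableSpace S] (c : MC S) : Prop :=
  ∀ x y : S, ∃ (k : ℕ) (u : ℕ → S), u 0 = x ∧ u k = y ∧ ∀ i < k, 0 < c.P (u i) (u (i + 1))

/-- Positive recurrence (for an irreducible chain): all mean (positive) hitting times
are finite. -/
def MC.PositiveRecurrent {S : Type*} [MeasurableSpace S] (c : MC S) : Prop :=
  ∀ x y : S, ∫⁻ ω, hitTimePos {y} ω ∂(c.law x) < ⊤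

/-- Mean hitting time `E[T^{(a)}_{x→ℓ}]` of the distinguished state `ℓ a` from `x`. -/
def meanHitLow (S : ℕ → Type*) [∀ a, MeasurableSpace (S a)] (X : ∀ a, MC (S a))
    (ℓ : ∀ a, S a) (a : ℕ) (x : S a) : ℝ≥0∞ :=
  ∫⁻ ω, hitTime {ℓ a} ω ∂((X a).law x)

/-- Mean hitting time `E[T^{(a)}_{ℓ→H_a}]` of the high region `H a` from `ℓ a`. -/
def meanHitHigh (S : ℕ → Type*) [∀ a, MeasurableSpace (S a)] (X : ∀ a, MC (S a))
    (ℓ : ∀ a, S a) (H : ∀ a, Set (S a)) (a : ℕ) : ℝ≥0∞ :=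
  ∫⁻ ω, hitTimePos (H a) ω ∂((X a).law (ℓ a))

/-- The normalized hitting time `S^{(a)} = T^{(a)}_{ℓ→H_a} / E[T^{(a)}_{ℓ→H_a}]`. -/
def Snorm (S : ℕ → Type*) [∀ a, MeasurableSpace (S a)] (X : ∀ a, MC (S a))
    (ℓ : ∀ a, S a) (H : ∀ a, Set (S a)) (a : ℕ) (ω : ℕ → S a) : ℝ≥0∞ :=
  hitTimePos (H a) ω / meanHitHigh S X ℓ H a

/-- The intermediate time scale
`Δ_a = sqrt( E[T^{(a)}_{ℓ→H_a}] · sup_x E[T^{(a)}_{x→ℓ}] )`. -/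
def DeltaA (S : ℕ → Type*) [∀ a, MeasurableSpace (S a)] (X : ∀ a, MC (S a))
    (ℓ : ∀ a, S a) (H : ∀ a, Set (S a)) (a : ℕ) : ℝ≥0∞ :=
  (meanHitHigh S X ℓ H a * ⨆ x : S a, meanHitLow S X ℓ a x) ^ (1 / 2 : ℝ)

/-- `β_a = Δ_a / E[T^{(a)}_{ℓ→H_a}]`. -/
def betaA (S : ℕ → Type*) [∀ a, MeasurableSpace (S a)] (X : ∀ a, MC (S a))
    (ℓ : ∀ a, S a) (H : ∀ a, Set (S a)) (a : ℕ) : ℝ≥0∞ :=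
  DeltaA S X ℓ H a / meanHitHigh S X ℓ H a

/-- `S̃^{(a)}_s = T̃^{(a)}_s / E[T^{(a)}_{ℓ→H_a}]`, where `T̃^{(a)}_s` is the first
return time to `ℓ` after time `s · E[T^{(a)}_{ℓ→H_a}]`. -/
def Sreturn (S : ℕ → Type*) [∀ a, MeasurableSpace (S a)] (X : ∀ a, MC (S a))
    (ℓ : ∀ a, S a) (H : ∀ a, Set (S a)) (s : ℝ) (a : ℕ) (ω : ℕ → S a) : ℝ≥0∞ :=
  hitTimeAfter {ℓ a} (ENNReal.ofReal s * meanHitHigh S X ℓ H a) ω / meanHitHigh S X ℓ H a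

theorem exists_iInf_natCast_eq {P : ℕ → Prop} (h : ∃ k, P k) :
    ∃ k, P k ∧ ⨅ (j : ℕ) (_ : P j), (j : ℝ≥0∞) = k := by
  classical
  refine ⟨Nat.find h, Nat.find_spec h, le_antisymm (iInf₂_le _ (Nat.find_spec h)) ?_⟩
  exact le_iInf₂ fun j hj => Nat.cast_le.mpr (Nat.find_min' h hj)

theorem iInf_natCast_eq_top_iff {P : ℕ → Prop} :
    ⨅ (j : ℕ) (_ : P j), (j : ℝ≥0∞) = ⊤ ↔ ∀ k, ¬ P k := by
  simp [iInf_eq_top]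

section HittingTimes

variable {S : Type*} {A B : Set S} {r w : ℝ≥0∞} {ω : ℕ → S}

theorem hitTimeAfter_eq_iInf (A : Set S) (r : ℝ≥0∞) (ω : ℕ → S) :
    hitTimeAfter A r ω = ⨅ (k : ℕ) (_ : r ≤ k ∧ ω k ∈ A), (k : ℝ≥0∞) := by
  simp only [hitTimeAfter, iInf_and]

theorem hitTimePos_eq_hitTimeAfter_one (A : Set S) : hitTimePos A = hitTimeAfter A 1 := by
  ext ω
  simp only [hitTimePos, hitTimeAfter, Nat.one_le_cast, Nat.one_le_iff_ne_zero, Nat.pos_iff_ne_zero]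

theorem one_le_hitTimePos (A : Set S) (ω : ℕ → S) : 1 ≤ hitTimePos A ω := by
  rw [hitTimePos_eq_hitTimeAfter_one, hitTimeAfter_eq_iInf]
  exact le_iInf₂ fun k hk => hk.1

theorem hitTimeAfter_le_natCast {k : ℕ} (hrk : r ≤ k) (hk : ω k ∈ A) :
    hitTimeAfter A r ω ≤ k := by
  rw [hitTimeAfter_eq_iInf]
  exact iInf₂_le k ⟨hrk, hk⟩

theorem hitTimeAfter_le_hitTimeAfter {r' : ℝ≥0∞} {ω' : ℕ → S}
    (hr : ∀ k : ℕ, r' ≤ k → r ≤ k) (h : ∀ k, ω' k ∈ B → ω k ∈ A) :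
    hitTimeAfter A r ω ≤ hitTimeAfter B r' ω' := by
  simp only [hitTimeAfter_eq_iInf]
  exact le_iInf₂ fun k ⟨hrk, hk⟩ => iInf₂_le k ⟨hr k hrk, h k hk⟩

theorem hitTimePos_le_hitTimePos {ω' : ℕ → S} (h : ∀ k, ω' k ∈ B → ω k ∈ A) :
    hitTimePos A ω ≤ hitTimePos B ω' := by
  simp only [hitTimePos_eq_hitTimeAfter_one]
  exact hitTimeAfter_le_hitTimeAfter (fun _ => id) h

theorem hitTimePos_le_hitTimeAfter (hAB : A ⊆ B) (hr : 0 < r) (ω : ℕ → S) :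
    hitTimePos B ω ≤ hitTimeAfter A r ω := by
  rw [hitTimePos_eq_hitTimeAfter_one]
  exact hitTimeAfter_le_hitTimeAfter
    (fun k hrk => Nat.one_le_cast.mpr (Nat.cast_pos.mp (hr.trans_le hrk))) fun k hk => hAB hk

theorem lt_hitTimeAfter_iff (hw : w ≠ ⊤) :
    w < hitTimeAfter A r ω ↔ ∀ k : ℕ, r ≤ k → (k : ℝ≥0∞) ≤ w → ω k ∉ A := by
  refine ⟨fun h k hrk hkw hk => (h.trans_le (hitTimeAfter_le_natCast hrk hk)).not_ge hkw,
    fun h => ?_⟩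
  rw [hitTimeAfter_eq_iInf]
  by_cases hex : ∃ k : ℕ, r ≤ k ∧ ω k ∈ A
  · obtain ⟨k, ⟨hrk, hk⟩, heq⟩ := exists_iInf_natCast_eq hex
    exact heq ▸ lt_of_not_ge fun hkw => h k hrk hkw hk
  · rw [iInf_natCast_eq_top_iff.mpr (not_exists.mp hex)]
    exact hw.lt_top

theorem lt_hitTimePos_iff (hw : w ≠ ⊤) :
    w < hitTimePos A ω ↔ ∀ k : ℕ, 0 < k → (k : ℝ≥0∞) ≤ w → ω k ∉ A := by
  simp only [hitTimePos_eq_hitTimeAfter_one, lt_hitTimeAfter_iff hw, Nat.one_le_cast,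
    Nat.one_le_iff_ne_zero, Nat.pos_iff_ne_zero]

theorem exists_hitTimeAfter_eq_natCast (h : hitTimeAfter A r ω ≠ ⊤) :
    ∃ k : ℕ, r ≤ k ∧ ω k ∈ A ∧ hitTimeAfter A r ω = k := by
  rw [hitTimeAfter_eq_iInf, Ne, iInf_natCast_eq_top_iff, not_forall_not] at h
  obtain ⟨k, ⟨hrk, hk⟩, heq⟩ := exists_iInf_natCast_eq h
  exact ⟨k, hrk, hk, hitTimeAfter_eq_iInf A r ω ▸ heq⟩

theorem hitTimeAfter_eq_natCast_iff {k : ℕ} :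
    hitTimeAfter A r ω = k ↔ r ≤ k ∧ ω k ∈ A ∧ ∀ j < k, r ≤ j → ω j ∉ A := by
  refine ⟨fun h => ?_, fun ⟨hrk, hk, hmin⟩ => le_antisymm (hitTimeAfter_le_natCast hrk hk) ?_⟩
  · obtain ⟨i, hri, hi, hik⟩ := exists_hitTimeAfter_eq_natCast (h ▸ ENNReal.natCast_ne_top k)
    obtain rfl : i = k := by exact_mod_cast hik.symm.trans h
    exact ⟨hri, hi, fun j hjk hrj hj =>
      hjk.not_ge (by exact_mod_cast h ▸ hitTimeAfter_le_natCast hrj hj)⟩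
  · rw [hitTimeAfter_eq_iInf]
    exact le_iInf₂ fun j ⟨hrj, hj⟩ => Nat.cast_le.mpr (not_lt.mp fun hjk => hmin j hjk hrj hj)

theorem lt_hitTimePos_iff_of_le {r : ℕ} (hrw : (r : ℝ≥0∞) ≤ w) (hw : w ≠ ⊤) :
    w < hitTimePos A ω ↔ r < hitTimePos A ω ∧ w - r < hitTimePos A (fun j => ω (r + j)) := by
  have hsub : ∀ j : ℕ, (j : ℝ≥0∞) ≤ w - r ↔ ((r + j : ℕ) : ℝ≥0∞) ≤ w := fun j => by
    rw [ENNReal.le_sub_iff_add_le_left (ENNReal.natCast_ne_top r) hrw, Nat.cast_add]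
  simp only [lt_hitTimePos_iff hw, lt_hitTimePos_iff (ENNReal.natCast_ne_top r),
    lt_hitTimePos_iff (ENNReal.sub_ne_top hw), hsub]
  constructor
  · exact fun h => ⟨fun k hk hkr => h k hk (hkr.trans hrw), fun j hj => h (r + j) (by omega)⟩
  · rintro ⟨h₁, h₂⟩ k hk hkw
    rcases le_or_gt k r with hkr | hrk
    · exact h₁ k hk (Nat.cast_le.mpr hkr)
    · obtain ⟨j, rfl⟩ := Nat.exists_eq_add_of_le hrk.le
      exact h₂ j (by omega) hkw

theorem setOf_lt_hitTimePos_inter_eq_empty {x₀ : S} (hx₀ : x₀ ∈ A) {w₁ w₂ : ℝ≥0∞} (h₀ : 0 < w₁)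
    (h₂ : w₂ ≤ w) : {ω | w < hitTimePos A ω} ∩ {ω | hitTimeAfter {x₀} w₁ ω ≤ w₂} = ∅ :=
  Set.eq_empty_iff_forall_notMem.mpr fun ω ⟨h₁, h₂'⟩ => lt_irrefl w <| h₁.trans_le <|
    (hitTimePos_le_hitTimeAfter (Set.singleton_subset_iff.mpr hx₀) h₀ ω).trans (h₂'.trans h₂)

theorem measurable_hitTimeAfter [MeasurableSpace S] (hA : MeasurableSet A) :
    Measurable (hitTimeAfter A r) := by
  classical
  refine Measurable.iInf fun k => Measurable.iInf fun _ => ?_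
  simp_rw [iInf_eq_if]
  exact Measurable.ite (measurable_pi_apply k hA) measurable_const measurable_const

theorem measurable_hitTimePos [MeasurableSpace S] (hA : MeasurableSet A) :
    Measurable (hitTimePos A) :=
  hitTimePos_eq_hitTimeAfter_one A ▸ measurable_hitTimeAfter hA

theorem dependsOn_lt_hitTimePos {m : ℕ} (hw : w ≠ ⊤) (hwm : w ≤ m) :
    DependsOn (fun ω : ℕ → S => w < hitTimePos A ω) (Set.Iic m) := by
  intro ω ω' h
  have h' : ∀ k : ℕ, (k : ℝ≥0∞) ≤ w → ω k = ω' k :=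
    fun k hkw => h k (Nat.cast_le.mp (hkw.trans hwm))
  simp only [lt_hitTimePos_iff hw, eq_iff_iff]
  exact forall_congr' fun k => forall_congr' fun _ => forall_congr' fun hkw => by rw [h' k hkw]

theorem dependsOn_hitTimeAfter_eq {k : ℕ} :
    DependsOn (fun ω : ℕ → S => hitTimeAfter A r ω = k) (Set.Iic k) := by
  intro ω ω' h
  simp only [hitTimeAfter_eq_natCast_iff, h k Set.self_mem_Iic, eq_iff_iff]
  refine and_congr_right' (and_congr_right' (forall₂_congr fun j hjk => ?_))
  rw [h j (Set.mem_Iic.mpr hjk.le)]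

def firstVisitAvoiding (L : Set S) (w₁ : ℝ≥0∞) (K : Set S) (r : ℕ) : Set (ℕ → S) :=
  {ω | hitTimeAfter L w₁ ω = r ∧ (r : ℝ≥0∞) < hitTimePos K ω}

theorem pairwise_disjoint_firstVisitAvoiding (L K : Set S) (w₁ : ℝ≥0∞) :
    Pairwise (Function.onFun Disjoint (firstVisitAvoiding L w₁ K)) := fun _ _ hrr' =>
  Set.disjoint_left.mpr fun _ h h' => hrr' (Nat.cast_injective (h.1.symm.trans h'.1))

theorem dependsOn_firstVisitAvoiding (L K : Set S) (w₁ : ℝ≥0∞) (r : ℕ) :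
    DependsOn (· ∈ firstVisitAvoiding L w₁ K r) (Set.Iic r) := fun _ _ h =>
  congrArg₂ And (dependsOn_hitTimeAfter_eq h)
    (dependsOn_lt_hitTimePos (ENNReal.natCast_ne_top r) le_rfl h)

theorem measurableSet_firstVisitAvoiding [MeasurableSpace S] {L K : Set S} (hL : MeasurableSet L)
    (hK : MeasurableSet K) (w₁ : ℝ≥0∞) (r : ℕ) : MeasurableSet (firstVisitAvoiding L w₁ K r) :=
  (measurable_hitTimeAfter hL (measurableSet_singleton _)).inter
    (measurableSet_lt measurable_const (measurable_hitTimePos hK))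

end HittingTimes

section Atoms

variable {X : Type*} [MeasurableSpace X]

theorem mem_measurableAtom_comm {x y : X} : y ∈ measurableAtom x ↔ x ∈ measurableAtom y :=
  ⟨fun h => measurableAtom_eq_of_mem h ▸ mem_measurableAtom_self x,
    fun h => measurableAtom_eq_of_mem h ▸ mem_measurableAtom_self y⟩

theorem mem_measurableAtom_pi {ι : Type*} {β : ι → Type*} [∀ i, MeasurableSpace (β i)]
    {ω ω' : ∀ i, β i} (h : ∀ i, ω' i ∈ measurableAtom (ω i)) : ω' ∈ measurableAtom ω := by
  let m : MeasurableSpace (∀ i, β i) :=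
    { MeasurableSet' := fun B => ω ∈ B ↔ ω' ∈ B
      measurableSet_empty := by simp
      measurableSet_compl := fun _ hB => not_congr hB
      measurableSet_iUnion := fun _ hf => by simp only [Set.mem_iUnion]; exact exists_congr hf }
  have hpi : MeasurableSpace.pi ≤ m := by
    refine iSup_le fun i => ?_
    rintro _ ⟨t, ht, rfl⟩
    exact ⟨fun hω => mem_of_mem_measurableAtom (h i) ht hω,
      fun hω' => mem_of_mem_measurableAtom (mem_measurableAtom_comm.mp (h i)) ht hω'⟩
  simp only [measurableAtom, Set.mem_iInter]
  exact fun B hωB hB => (hpi B hB).mp hωB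

theorem measure_le_of_forall_exists_mem_measurableAtom (μ : Measure X) {M N : Set X}
    (h : ∀ x ∈ M, ∃ y ∈ N, x ∈ measurableAtom y) : μ M ≤ μ N := by
  refine (measure_mono fun x hx => ?_).trans (measure_toMeasurable N).le
  obtain ⟨y, hy, hxy⟩ := h x hx
  exact mem_of_mem_measurableAtom hxy (measurableSet_toMeasurable μ N) (subset_toMeasurable μ N hy)

theorem measurableSet_of_forall_measurableAtom_subset [Countable X] {s : Set X}
    (h : ∀ x ∈ s, measurableAtom x ⊆ s) : MeasurableSet s := by
  have hs : s = ⋃ x ∈ s, measurableAtom x :=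
    subset_antisymm (fun x hx => Set.mem_biUnion hx (mem_measurableAtom_self x))
      (Set.iUnion₂_subset h)
  rw [hs]
  exact .biUnion s.to_countable fun x _ => .measurableAtom_of_countable x

def atomInterior (s : Set X) : Set X := {x | measurableAtom x ⊆ s}

theorem atomInterior_subset (s : Set X) : atomInterior s ⊆ s :=
  fun x hx => hx (mem_measurableAtom_self x)

theorem measurableSet_atomInterior [Countable X] (s : Set X) : MeasurableSet (atomInterior s) :=
  measurableSet_of_forall_measurableAtom_subset fun _ hx _ hy =>
    (measurableAtom_eq_of_mem hy).trans_subset hx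

theorem exists_mem_measurableAtom_mem_imp_mem_atomInterior (s : Set X) (x : X) :
    ∃ y ∈ measurableAtom x, y ∈ s → x ∈ atomInterior s := by
  by_cases hx : x ∈ atomInterior s
  · exact ⟨x, mem_measurableAtom_self x, fun _ => hx⟩
  · obtain ⟨y, hy, hys⟩ := Set.not_subset.mp hx
    exact ⟨y, hy, fun h => absurd h hys⟩

def atomRep (x : X) : X := @Classical.epsilon X ⟨x⟩ (· ∈ measurableAtom x)

theorem atomRep_mem (x : X) : atomRep x ∈ measurableAtom x :=
  @Classical.epsilon_spec X (· ∈ measurableAtom x) ⟨x, mem_measurableAtom_self x⟩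

theorem atomRep_eq_atomRep_iff {x y : X} : atomRep x = atomRep y ↔ x ∈ measurableAtom y := by
  refine ⟨fun h => ?_, fun h => by rw [atomRep, atomRep, measurableAtom_eq_of_mem h]⟩
  rw [← measurableAtom_eq_of_mem (atomRep_mem y), ← h, measurableAtom_eq_of_mem (atomRep_mem x)]
  exact mem_measurableAtom_self x

def atomCylinder (u : ℕ → X) (n : ℕ) : Set (ℕ → X) := {ω | ∀ k ≤ n, ω k ∈ measurableAtom (u k)}

theorem measurableSet_atomCylinder [Countable X] (u : ℕ → X) (n : ℕ) :
    MeasurableSet (atomCylinder u n) := by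
  simp only [atomCylinder, Set.ofPred_forall]
  exact .iInter fun k => .iInter fun _ => measurable_pi_apply k (.measurableAtom_of_countable _)

theorem atomCylinder_congr {u v : ℕ → X} {n : ℕ} (h : ∀ k ≤ n, u k = v k) :
    atomCylinder u n = atomCylinder v n := by
  ext ω
  exact forall₂_congr fun k hk => by rw [h k hk]

theorem atomCylinder_add (v : ℕ → X) (n m : ℕ) :
    atomCylinder v (n + m) =
      atomCylinder v n ∩ (fun ω j => ω (n + j)) ⁻¹' atomCylinder (fun j => v (n + j)) m := by
  ext ω
  simp only [atomCylinder, Set.mem_inter_iff, Set.mem_preimage, Set.mem_ofPred_eq]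
  refine ⟨fun h => ⟨fun k hk => h k (by omega), fun j hj => h (n + j) (by omega)⟩, ?_⟩
  rintro ⟨h₁, h₂⟩ k hk
  rcases le_or_gt k n with hkn | hnk
  · exact h₁ k hkn
  · obtain ⟨j, rfl⟩ := Nat.exists_eq_add_of_le hnk.le
    exact h₂ j (by omega)

theorem mem_of_mem_atomCylinder {A : Set (ℕ → X)} {n : ℕ} (hA : MeasurableSet A)
    (hAn : DependsOn (· ∈ A) (Set.Iic n)) {ω ω' : ℕ → X} (hω : ω ∈ A)
    (h : ω' ∈ atomCylinder ω n) : ω' ∈ A := by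
  let ω'' : ℕ → X := fun k => if k ≤ n then ω' k else ω k
  have hω'' : ω'' ∈ A := by
    refine mem_of_mem_measurableAtom (mem_measurableAtom_pi fun k => ?_) hA hω
    by_cases hk : k ≤ n
    · simpa [ω'', hk] using h k hk
    · simp [ω'', hk]
  exact Eq.mp (hAn fun k hk => if_pos (Set.mem_Iic.mp hk)) hω''

def atomPath (n : ℕ) (ω : ℕ → X) : ℕ → X := fun k => atomRep (ω (min k n))

theorem atomPath_preimage_singleton (n : ℕ) (ω : ℕ → X) :
    atomPath n ⁻¹' {atomPath n ω} = atomCylinder ω n := by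
  ext ω'
  simp only [Set.mem_preimage, Set.mem_singleton_iff, funext_iff, atomPath, atomRep_eq_atomRep_iff,
    atomCylinder, Set.mem_ofPred_eq]
  refine ⟨fun h k hk => by simpa [min_eq_left hk] using h k, fun h k => h _ (min_le_right k n)⟩

theorem atomCylinder_atomPath (n : ℕ) (ω : ℕ → X) :
    atomCylinder (atomPath n ω) n = atomCylinder ω n := by
  ext ω'
  refine forall₂_congr fun k hk => ?_
  simp only [atomPath, min_eq_left hk, measurableAtom_eq_of_mem (atomRep_mem _)]

theorem countable_image_atomPath [Countable X] (n : ℕ) (A : Set (ℕ → X)) :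
    (atomPath n '' A).Countable := by
  refine (Set.countable_range fun (v : Fin (n + 1) → X) k =>
    atomRep (v ⟨min k n, Nat.lt_succ_of_le (min_le_right k n)⟩)).mono ?_
  rintro _ ⟨ω, -, rfl⟩
  exact ⟨fun i => ω i, rfl⟩

theorem measure_eq_tsum_atomCylinder [Countable X] (μ : Measure (ℕ → X)) {A : Set (ℕ → X)}
    {n : ℕ} (hA : MeasurableSet A) (hAn : DependsOn (· ∈ A) (Set.Iic n)) :
    μ A = ∑' u : atomPath n '' A, μ (atomCylinder u n) := by
  have hpre : atomPath n ⁻¹' (atomPath n '' A) = A := by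
    refine subset_antisymm ?_ (Set.subset_preimage_image _ _)
    rintro ω' ⟨ω, hω, he⟩
    refine mem_of_mem_atomCylinder hA hAn hω ?_
    rw [← atomPath_preimage_singleton]
    exact he.symm
  have hfib : ∀ u ∈ atomPath n '' A, atomPath n ⁻¹' {u} = atomCylinder u n := by
    rintro _ ⟨ω, -, rfl⟩
    rw [atomPath_preimage_singleton, atomCylinder_atomPath]
  calc μ A = μ (atomPath n ⁻¹' (atomPath n '' A)) := by rw [hpre]
    _ = ∑' u : atomPath n '' A, μ (atomPath n ⁻¹' {(u : ℕ → X)}) :=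
      (tsum_measure_preimage_singleton (countable_image_atomPath n A)
        fun u hu => hfib u hu ▸ measurableSet_atomCylinder u n).symm
    _ = _ := tsum_congr fun u => by rw [hfib u u.2]

end Atoms

section Transfer

variable {X : Type*} [MeasurableSpace X]

theorem measure_lt_hitTimePos_atomInterior (ν : Measure (ℕ → X)) (H : Set X) (w : ℝ≥0∞) :
    ν {ω | w < hitTimePos H ω} = ν {ω | w < hitTimePos (atomInterior H) ω} := by
  choose pick hpick hpickH using exists_mem_measurableAtom_mem_imp_mem_atomInterior H
  refine le_antisymm (measure_mono fun ω (hω : w < _) =>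
    hω.trans_le (hitTimePos_le_hitTimePos fun k hk => atomInterior_subset H hk)) ?_
  refine measure_le_of_forall_exists_mem_measurableAtom ν fun ω (hω : w < _) =>
    ⟨pick ∘ ω, ?_, mem_measurableAtom_pi fun k => mem_measurableAtom_comm.mp (hpick _)⟩
  exact hω.trans_le (hitTimePos_le_hitTimePos fun k => hpickH (ω k))

theorem measure_lt_hitTimePos_inter_hitTimeAfter_le_atomInterior (ν : Measure (ℕ → X))
    {H : Set X} {x₀ : X} (hx₀ : x₀ ∉ H) (w r : ℝ≥0∞) {w' : ℝ≥0∞} (hw' : w' ≠ ⊤) :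
    ν ({ω | w < hitTimePos H ω} ∩ {ω | hitTimeAfter {x₀} r ω ≤ w'}) =
      ν ({ω | w < hitTimePos (atomInterior H) ω} ∩
        {ω | hitTimeAfter (measurableAtom x₀) r ω ≤ w'}) := by
  choose pick hpick hpickH using exists_mem_measurableAtom_mem_imp_mem_atomInterior H
  refine le_antisymm (measure_mono fun ω ⟨(hω : w < _), (hω' : _ ≤ w')⟩ =>
    ⟨hω.trans_le (hitTimePos_le_hitTimePos fun k hk => atomInterior_subset H hk),
      (hitTimeAfter_le_hitTimeAfter (fun _ => id) fun k (hk : ω k = x₀) =>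
        hk ▸ mem_measurableAtom_self _).trans hω'⟩) ?_
  refine measure_le_of_forall_exists_mem_measurableAtom ν fun ω ⟨(hω : w < _), (hω' : _ ≤ w')⟩ => ?_
  obtain ⟨k, hrk, hkx₀, hk⟩ := exists_hitTimeAfter_eq_natCast (ne_top_of_le_ne_top hw' hω')
  -- move each coordinate within its atom off `H` where possible, and put `x₀` at the visit time
  refine ⟨Function.update (pick ∘ ω) k x₀, ⟨hω.trans_le (hitTimePos_le_hitTimePos fun j hj => ?_),
    (hitTimeAfter_le_natCast hrk (by simp)).trans (hk ▸ hω')⟩,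
    mem_measurableAtom_pi fun j => ?_⟩
  · rcases eq_or_ne j k with rfl | hjk
    · exact absurd (by simpa using hj) hx₀
    · exact hpickH _ (by simpa [hjk] using hj)
  · rcases eq_or_ne j k with rfl | hjk
    · simpa using hkx₀
    · simpa [hjk] using mem_measurableAtom_comm.mp (hpick (ω j))

end Transfer

namespace MC

variable {X : Type*} [MeasurableSpace X] (c : MC X)

theorem law_atomCylinder (x : X) (u : ℕ → X) (n : ℕ) :
    c.law x (atomCylinder u n) = c.law x {ω | ∀ i ≤ n, ω i = u i} := by
  refine le_antisymm (measure_le_of_forall_exists_mem_measurableAtom _ fun ω hω => ?_)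
    (measure_mono fun ω hω k hk => hω k hk ▸ mem_measurableAtom_self _)
  refine ⟨fun k => if k ≤ n then u k else ω k, fun i hi => if_pos hi,
    mem_measurableAtom_pi fun k => ?_⟩
  split_ifs with hk
  exacts [hω k hk, mem_measurableAtom_self _]

theorem law_atomCylinder_succ (x : X) (u : ℕ → X) (n : ℕ) :
    c.law x (atomCylinder u (n + 1)) =
      c.law x (atomCylinder u n) * ENNReal.ofReal (c.P (u n) (u (n + 1))) := by
  simp only [law_atomCylinder]
  exact c.markov x u n

theorem law_atomCylinder_zero {x : X} {u : ℕ → X} (h : u 0 ∈ measurableAtom x) :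
    c.law x (atomCylinder u 0) = 1 := by
  have := c.prob x
  refine le_antisymm prob_le_one ((c.init x).symm.trans_le (measure_mono ?_))
  rintro ω (hω : ω 0 = x) k hk
  obtain rfl := Nat.le_zero.mp hk
  exact hω ▸ mem_measurableAtom_comm.mp h

theorem law_atomCylinder_add {x : X} {v : ℕ → X} {n : ℕ} (hv : v n ∈ measurableAtom x) (m : ℕ) :
    c.law x (atomCylinder v (n + m)) =
      c.law x (atomCylinder v n) * c.law x (atomCylinder (fun j => v (n + j)) m) := by
  induction m with
  | zero => rw [c.law_atomCylinder_zero hv, mul_one, Nat.add_zero]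
  | succ m ih =>
    rw [← Nat.add_assoc, law_atomCylinder_succ, ih, law_atomCylinder_succ, mul_assoc]
    rfl

theorem law_atomCylinder_inter_shift {x : X} {u w : ℕ → X} {n m : ℕ} (huw : u n = w 0)
    (hw : w 0 ∈ measurableAtom x) :
    c.law x (atomCylinder u n ∩ (fun ω j => ω (n + j)) ⁻¹' atomCylinder w m) =
      c.law x (atomCylinder u n) * c.law x (atomCylinder w m) := by
  let v : ℕ → X := fun k => if k ≤ n then u k else w (k - n)
  have hvu : atomCylinder v n = atomCylinder u n := atomCylinder_congr fun k hk => if_pos hk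
  have hvw : (fun j => v (n + j)) = w := by
    funext j
    rcases Nat.eq_zero_or_pos j with rfl | hj
    · simpa [v] using huw
    · simp [v, show ¬ n + j ≤ n by omega]
  have hvn : v n ∈ measurableAtom x := by simpa [v, huw] using hw
  rw [← hvu, ← hvw, ← atomCylinder_add, c.law_atomCylinder_add hvn]

variable [Countable X]

theorem law_inter_shift_preimage_of_mem {x : X} {n m : ℕ} {A B : Set (ℕ → X)}
    (hA : MeasurableSet A) (hAn : DependsOn (· ∈ A) (Set.Iic n))
    (hAx : ∀ ω ∈ A, ω n ∈ measurableAtom x) (hB : MeasurableSet B)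
    (hBm : DependsOn (· ∈ B) (Set.Iic m)) (hBx : ∀ ω ∈ B, ω 0 ∈ measurableAtom x) :
    c.law x (A ∩ (fun ω j => ω (n + j)) ⁻¹' B) = c.law x A * c.law x B := by
  set μ := c.law x
  have hshift : Measurable fun (ω : ℕ → X) j => ω (n + j) :=
    measurable_pi_lambda _ fun j => measurable_pi_apply _
  rw [← Measure.restrict_apply hA, measure_eq_tsum_atomCylinder _ hA hAn,
    measure_eq_tsum_atomCylinder _ hA hAn, ← ENNReal.tsum_mul_right]
  refine tsum_congr fun u => ?_
  obtain ⟨ω, hω, hu⟩ := u.2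
  have hcyl := measurableSet_atomCylinder (u : ℕ → X) n
  rw [Measure.restrict_apply hcyl, Set.inter_comm, ← Measure.restrict_apply (hshift hB),
    ← Measure.map_apply hshift hB, measure_eq_tsum_atomCylinder _ hB hBm,
    measure_eq_tsum_atomCylinder _ hB hBm, ← ENNReal.tsum_mul_left]
  refine tsum_congr fun w => ?_
  obtain ⟨ω', hω', hw⟩ := w.2
  have hcyl' := measurableSet_atomCylinder (w : ℕ → X) m
  have hun : (u : ℕ → X) n = atomRep x := by
    rw [← hu, atomPath, min_self]
    exact atomRep_eq_atomRep_iff.mpr (hAx ω hω)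
  have hw0 : (w : ℕ → X) 0 = atomRep x := by
    rw [← hw, atomPath, Nat.zero_min]
    exact atomRep_eq_atomRep_iff.mpr (hBx ω' hω')
  rw [Measure.map_apply hshift hcyl', Measure.restrict_apply (hshift hcyl'), Set.inter_comm,
    c.law_atomCylinder_inter_shift (hun.trans hw0.symm) (hw0 ▸ atomRep_mem x)]

theorem law_inter_shift_preimage {x : X} {n m : ℕ} {A B : Set (ℕ → X)}
    (hA : MeasurableSet A) (hAn : DependsOn (· ∈ A) (Set.Iic n))
    (hAx : ∀ ω ∈ A, ω n ∈ measurableAtom x) (hB : MeasurableSet B)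
    (hBm : DependsOn (· ∈ B) (Set.Iic m)) :
    c.law x (A ∩ (fun ω j => ω (n + j)) ⁻¹' B) = c.law x A * c.law x B := by
  have := c.prob x
  -- at time `0` the chain is almost surely in the atom of `x`, so `B` may be cut down to that
  set Z := atomCylinder (fun _ => x) 0
  have hmemZ : ∀ ω, ω ∈ Z ↔ ω 0 ∈ measurableAtom x :=
    fun ω => ⟨fun h => h 0 le_rfl, fun h k hk => Nat.le_zero.mp hk ▸ h⟩
  have hZ : MeasurableSet Z := measurableSet_atomCylinder _ 0
  have hZc : c.law x Zᶜ = 0 :=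
    (prob_compl_eq_zero_iff hZ).mpr (c.law_atomCylinder_zero (mem_measurableAtom_self x))
  have hBZ : DependsOn (· ∈ B ∩ Z) (Set.Iic m) := fun ω ω' h => by
    simp only [Set.mem_inter_iff, hmemZ, h 0 (Set.mem_Iic.mpr (Nat.zero_le m))]
    rw [show (ω ∈ B) = (ω' ∈ B) from hBm h]
  have hAB : A ∩ (fun ω j => ω (n + j)) ⁻¹' B = A ∩ (fun ω j => ω (n + j)) ⁻¹' (B ∩ Z) := by
    ext ω
    simp only [Set.mem_inter_iff, Set.mem_preimage, hmemZ]
    exact and_congr_right fun hω => (and_iff_left (hAx ω hω)).symm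
  rw [hAB, c.law_inter_shift_preimage_of_mem hA hAn hAx (hB.inter hZ) hBZ
    fun ω h => (hmemZ ω).mp h.2, measure_inter_conull hZc]

variable {x₀ : X} {K H : Set X} {w₁ w₂ w₃ : ℝ≥0∞}

theorem law_lt_hitTimePos_inter_hitTimeAfter_le_eq_tsum (hK : MeasurableSet K) {w : ℝ≥0∞}
    (h₂ : w₂ ≤ w) (hw : w ≠ ⊤) :
    c.law x₀ ({ω | w < hitTimePos K ω} ∩ {ω | hitTimeAfter (measurableAtom x₀) w₁ ω ≤ w₂}) =
      ∑' r : {r : ℕ // w₁ ≤ r ∧ (r : ℝ≥0∞) ≤ w₂},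
        c.law x₀ (firstVisitAvoiding (measurableAtom x₀) w₁ K r) *
          c.law x₀ {ω | w - r < hitTimePos K ω} := by
  have hL : MeasurableSet (measurableAtom x₀) := .measurableAtom_of_countable x₀
  have hB : ∀ r : ℕ, MeasurableSet {ω : ℕ → X | w - r < hitTimePos K ω} :=
    fun r => measurableSet_lt measurable_const (measurable_hitTimePos hK)
  have hdecomp : {ω | w < hitTimePos K ω} ∩ {ω | hitTimeAfter (measurableAtom x₀) w₁ ω ≤ w₂} =
      ⋃ r : {r : ℕ // w₁ ≤ r ∧ (r : ℝ≥0∞) ≤ w₂}, firstVisitAvoiding (measurableAtom x₀) w₁ K r ∩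
        (fun ω j => ω (r + j)) ⁻¹' {ω | w - r < hitTimePos K ω} := by
    ext ω
    simp only [firstVisitAvoiding, Set.mem_inter_iff, Set.mem_ofPred_eq, Set.mem_iUnion,
      Set.mem_preimage]
    constructor
    · rintro ⟨hω, hR⟩
      obtain ⟨r, hw₁r, -, hr⟩ :=
        exists_hitTimeAfter_eq_natCast (ne_top_of_le_ne_top (ne_top_of_le_ne_top hw h₂) hR)
      have hrw := lt_hitTimePos_iff_of_le ((hr ▸ hR).trans h₂) hw (A := K) (ω := ω)
      exact ⟨⟨r, hw₁r, hr ▸ hR⟩, ⟨hr, (hrw.mp hω).1⟩, (hrw.mp hω).2⟩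
    · rintro ⟨r, ⟨hr, hrT⟩, hshiftT⟩
      exact ⟨(lt_hitTimePos_iff_of_le (r.2.2.trans h₂) hw).mpr ⟨hrT, hshiftT⟩, hr ▸ r.2.2⟩
  rw [hdecomp, measure_iUnion]
  · refine tsum_congr fun r => ?_
    obtain ⟨m, hm⟩ := ENNReal.exists_nat_gt (ENNReal.sub_ne_top hw (b := r))
    exact c.law_inter_shift_preimage (measurableSet_firstVisitAvoiding hL hK w₁ r)
      (dependsOn_firstVisitAvoiding _ _ _ r)
      (fun ω hω => (hitTimeAfter_eq_natCast_iff.mp hω.1).2.1)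
      (hB r) (dependsOn_lt_hitTimePos (ENNReal.sub_ne_top hw) hm.le)
  · exact fun r r' hrr' =>
      (pairwise_disjoint_firstVisitAvoiding _ _ _ fun h => hrr' (Subtype.ext h)).mono
        Set.inter_subset_left Set.inter_subset_left
  · exact fun r => (measurableSet_firstVisitAvoiding hL hK w₁ r).inter
      (measurable_pi_lambda _ (fun j => measurable_pi_apply _) (hB r))

theorem law_mul_law_le_of_measurableSet (hK : MeasurableSet K) (h₂₃ : w₂ ≤ w₃) (h₃ : w₃ ≠ ⊤) :
    c.law x₀ ({ω | w₂ < hitTimePos K ω} ∩ {ω | hitTimeAfter (measurableAtom x₀) w₁ ω ≤ w₂}) *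
        c.law x₀ {ω | w₃ - w₁ < hitTimePos K ω} ≤
      c.law x₀ ({ω | w₃ < hitTimePos K ω} ∩ {ω | hitTimeAfter (measurableAtom x₀) w₁ ω ≤ w₂}) := by
  have := c.prob x₀
  rw [c.law_lt_hitTimePos_inter_hitTimeAfter_le_eq_tsum hK le_rfl (ne_top_of_le_ne_top h₃ h₂₃),
    c.law_lt_hitTimePos_inter_hitTimeAfter_le_eq_tsum hK h₂₃ h₃, ← ENNReal.tsum_mul_right]
  refine ENNReal.tsum_le_tsum fun r => ?_
  rw [mul_assoc]
  gcongr
  calc _ ≤ c.law x₀ {ω | w₃ - w₁ < hitTimePos K ω} := mul_le_of_le_one_left' prob_le_one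
    _ ≤ _ := measure_mono fun ω hω => (tsub_le_tsub_left r.2.1 w₃).trans_lt hω

theorem law_le_law_mul_law_of_measurableSet (hK : MeasurableSet K) (h₂₃ : w₂ ≤ w₃)
    (h₃ : w₃ ≠ ⊤) :
    c.law x₀ ({ω | w₃ < hitTimePos K ω} ∩ {ω | hitTimeAfter (measurableAtom x₀) w₁ ω ≤ w₂}) ≤
      c.law x₀ {ω | w₁ < hitTimePos K ω} * c.law x₀ {ω | w₃ - w₂ < hitTimePos K ω} := by
  have hL : MeasurableSet (measurableAtom x₀) := .measurableAtom_of_countable x₀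
  rw [c.law_lt_hitTimePos_inter_hitTimeAfter_le_eq_tsum hK h₂₃ h₃]
  calc _ ≤ ∑' r : {r : ℕ // w₁ ≤ r ∧ (r : ℝ≥0∞) ≤ w₂},
        c.law x₀ (firstVisitAvoiding (measurableAtom x₀) w₁ K r) *
          c.law x₀ {ω | w₃ - w₂ < hitTimePos K ω} := by
        refine ENNReal.tsum_le_tsum fun r => ?_
        gcongr
        exact r.2.2
    _ = c.law x₀ (⋃ r : {r : ℕ // w₁ ≤ r ∧ (r : ℝ≥0∞) ≤ w₂},
          firstVisitAvoiding (measurableAtom x₀) w₁ K r) *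
          c.law x₀ {ω | w₃ - w₂ < hitTimePos K ω} := by
        rw [ENNReal.tsum_mul_right, measure_iUnion
          (f := fun r : {r : ℕ // w₁ ≤ r ∧ (r : ℝ≥0∞) ≤ w₂} =>
            firstVisitAvoiding (measurableAtom x₀) w₁ K r)
          (fun r r' hrr' =>
            pairwise_disjoint_firstVisitAvoiding _ _ _ fun h => hrr' (Subtype.ext h))
          fun r => measurableSet_firstVisitAvoiding hL hK w₁ r]
    _ ≤ _ := by
        gcongr
        exact Set.iUnion_subset fun r ω hω => r.2.1.trans_lt hω.2


theorem law_mul_law_le (h₀ : 0 < w₁) (h₃ : w₃ ≠ ⊤) :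
    c.law x₀ ({ω | w₂ < hitTimePos H ω} ∩ {ω | hitTimeAfter {x₀} w₁ ω ≤ w₂}) *
        c.law x₀ {ω | w₃ - w₁ < hitTimePos H ω} ≤
      c.law x₀ ({ω | w₃ < hitTimePos H ω} ∩ {ω | hitTimeAfter {x₀} w₁ ω ≤ w₂}) := by
  have := c.prob x₀
  rcases le_total w₃ w₂ with h₃₂ | h₂₃
  · exact (mul_le_of_le_one_right' prob_le_one).trans
      (measure_mono (Set.inter_subset_inter_left _ fun ω hω => h₃₂.trans_lt hω))
  by_cases hx₀ : x₀ ∈ H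
  · rw [setOf_lt_hitTimePos_inter_eq_empty hx₀ h₀ le_rfl, measure_empty, zero_mul]
    exact zero_le
  have h₂ := ne_top_of_le_ne_top h₃ h₂₃
  rw [measure_lt_hitTimePos_inter_hitTimeAfter_le_atomInterior _ hx₀ _ _ h₂,
    measure_lt_hitTimePos_inter_hitTimeAfter_le_atomInterior _ hx₀ _ _ h₂,
    measure_lt_hitTimePos_atomInterior]
  exact c.law_mul_law_le_of_measurableSet (measurableSet_atomInterior H) h₂₃ h₃

theorem law_le_law_mul_law (h₀ : 0 < w₁) (h₁₃ : w₁ ≤ w₃) (h₃ : w₃ ≠ ⊤) :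
    c.law x₀ ({ω | w₃ < hitTimePos H ω} ∩ {ω | hitTimeAfter {x₀} w₁ ω ≤ w₂}) ≤
      c.law x₀ {ω | w₁ < hitTimePos H ω} * c.law x₀ {ω | w₃ - w₂ < hitTimePos H ω} := by
  have := c.prob x₀
  rcases le_total w₃ w₂ with h₃₂ | h₂₃
  · have huniv : {ω | w₃ - w₂ < hitTimePos H ω} = Set.univ := Set.eq_univ_of_forall fun ω =>
      (tsub_eq_zero_of_le h₃₂).trans_lt (zero_lt_one.trans_le (one_le_hitTimePos H ω))
    rw [huniv, measure_univ, mul_one]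
    exact measure_mono (Set.inter_subset_left.trans fun ω hω => h₁₃.trans_lt hω)
  by_cases hx₀ : x₀ ∈ H
  · rw [setOf_lt_hitTimePos_inter_eq_empty hx₀ h₀ h₂₃, measure_empty]
    exact zero_le
  rw [measure_lt_hitTimePos_inter_hitTimeAfter_le_atomInterior _ hx₀ _ _
    (ne_top_of_le_ne_top h₃ h₂₃), measure_lt_hitTimePos_atomInterior _ H w₁,
    measure_lt_hitTimePos_atomInterior _ H (w₃ - w₂)]
  exact c.law_le_law_mul_law_of_measurableSet (measurableSet_atomInterior H) h₂₃ h₃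

end MC

section Normalization

variable (S : ℕ → Type*) [∀ a, MeasurableSpace (S a)] (X : ∀ a, MC (S a)) (ℓ : ∀ a, S a)
  (H : ∀ a, Set (S a)) (a : ℕ)

theorem one_le_meanHitHigh : 1 ≤ meanHitHigh S X ℓ H a := by
  have := (X a).prob (ℓ a)
  calc (1 : ℝ≥0∞) = ∫⁻ _, 1 ∂(X a).law (ℓ a) := by simp
    _ ≤ _ := lintegral_mono fun ω => one_le_hitTimePos _ ω

theorem Snorm_eq_zero (hE : meanHitHigh S X ℓ H a = ⊤) (ω : ℕ → S a) : Snorm S X ℓ H a ω = 0 := by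
  rw [Snorm, hE, ENNReal.div_top]

variable {S X ℓ H a}

theorem setOf_lt_Snorm (hE : meanHitHigh S X ℓ H a ≠ ⊤) (w : ℝ≥0∞) :
    {ω | w < Snorm S X ℓ H a ω} = {ω | w * meanHitHigh S X ℓ H a < hitTimePos (H a) ω} :=
  Set.ext fun _ => ENNReal.lt_div_iff_mul_lt
    (.inl (zero_lt_one.trans_le (one_le_meanHitHigh S X ℓ H a)).ne') (.inl hE)

theorem setOf_Sreturn_le (hE : meanHitHigh S X ℓ H a ≠ ⊤) (s : ℝ) (w : ℝ≥0∞) :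
    {ω | Sreturn S X ℓ H s a ω ≤ w} = {ω | hitTimeAfter {ℓ a}
      (ENNReal.ofReal s * meanHitHigh S X ℓ H a) ω ≤ w * meanHitHigh S X ℓ H a} :=
  Set.ext fun _ => ENNReal.div_le_iff_le_mul
    (.inl (zero_lt_one.trans_le (one_le_meanHitHigh S X ℓ H a)).ne') (.inl hE)

end Normalization

theorem factorization_inequalities_general (S : ℕ → Type*) [∀ a, MeasurableSpace (S a)]
    [∀ a, Countable (S a)] (X : ∀ a, MC (S a))
    (ℓ : ∀ a, S a) (H : ∀ a, Set (S a)) :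
    ∀ (a : ℕ) (s t : ℝ), 0 < s → 0 < t →
      ((X a).law (ℓ a) ({ω | ENNReal.ofReal (s + t) < Snorm S X ℓ H a ω}
            ∩ {ω | Sreturn S X ℓ H s a ω ≤ ENNReal.ofReal s + betaA S X ℓ H a})
          ≥ (X a).law (ℓ a) ({ω | ENNReal.ofReal s + betaA S X ℓ H a < Snorm S X ℓ H a ω}
              ∩ {ω | Sreturn S X ℓ H s a ω ≤ ENNReal.ofReal s + betaA S X ℓ H a})
            * (X a).law (ℓ a) {ω | ENNReal.ofReal t < Snorm S X ℓ H a ω}) ∧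
      ((X a).law (ℓ a) ({ω | ENNReal.ofReal (s + t) < Snorm S X ℓ H a ω}
            ∩ {ω | Sreturn S X ℓ H s a ω ≤ ENNReal.ofReal s + betaA S X ℓ H a})
          ≤ (X a).law (ℓ a) {ω | ENNReal.ofReal s < Snorm S X ℓ H a ω}
            * (X a).law (ℓ a)
              {ω | ENNReal.ofReal t - betaA S X ℓ H a < Snorm S X ℓ H a ω}) := by
  intro a s t hs ht
  set E := meanHitHigh S X ℓ H a
  rcases eq_or_ne E ⊤ with hE | hE
  · simp [Snorm_eq_zero S X ℓ H a hE]
  have h₀ : 0 < ENNReal.ofReal s * E := ENNReal.mul_pos (ENNReal.ofReal_pos.mpr hs).ne'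
    (zero_lt_one.trans_le (one_le_meanHitHigh S X ℓ H a)).ne'
  have h₃ : ENNReal.ofReal (s + t) * E ≠ ⊤ := ENNReal.mul_ne_top ENNReal.ofReal_ne_top hE
  have hst : ENNReal.ofReal (s + t) = ENNReal.ofReal s + ENNReal.ofReal t :=
    ENNReal.ofReal_add hs.le ht.le
  have hsub₁ : ENNReal.ofReal (s + t) * E - ENNReal.ofReal s * E = ENNReal.ofReal t * E := by
    rw [← ENNReal.sub_mul fun _ _ => hE, hst, ENNReal.add_sub_cancel_left ENNReal.ofReal_ne_top]
  have hsub₂ : ENNReal.ofReal (s + t) * E - (ENNReal.ofReal s + betaA S X ℓ H a) * E =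
      (ENNReal.ofReal t - betaA S X ℓ H a) * E := by
    rw [← ENNReal.sub_mul fun _ _ => hE, hst, ENNReal.add_sub_add_eq_sub_left]
  simp only [setOf_lt_Snorm hE, setOf_Sreturn_le hE]
  refine ⟨hsub₁ ▸ (X a).law_mul_law_le h₀ h₃, hsub₂ ▸ (X a).law_le_law_mul_law h₀ ?_ h₃⟩
  gcongr
  linarith

/-- For irreducible positive recurrent Markov chains on countable
state spaces, for all `s, t > 0` and every `a`:
`P(S^{(a)} > s+t, S̃^{(a)}_s ≤ s+β_a) ≥ P(S^{(a)} > s+β_a, S̃^{(a)}_s ≤ s+β_a) · P(S^{(a)} > t)`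
and
`P(S^{(a)} > s+t, S̃^{(a)}_s ≤ s+β_a) ≤ P(S^{(a)} > s) · P(S^{(a)} > t-β_a)`. -/
theorem factorization_inequalities (S : ℕ → Type*) [∀ a, MeasurableSpace (S a)]
    [∀ a, Countable (S a)] (X : ∀ a, MC (S a))
    (hirr : ∀ a, (X a).Irreducible) (hrec : ∀ a, (X a).PositiveRecurrent)
    (ℓ : ∀ a, S a) (H : ∀ a, Set (S a)) :
    ∀ (a : ℕ) (s t : ℝ), 0 < s → 0 < t →
      ((X a).law (ℓ a) ({ω | ENNReal.ofReal (s + t) < Snorm S X ℓ H a ω}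
            ∩ {ω | Sreturn S X ℓ H s a ω ≤ ENNReal.ofReal s + betaA S X ℓ H a})
          ≥ (X a).law (ℓ a) ({ω | ENNReal.ofReal s + betaA S X ℓ H a < Snorm S X ℓ H a ω}
              ∩ {ω | Sreturn S X ℓ H s a ω ≤ ENNReal.ofReal s + betaA S X ℓ H a})
            * (X a).law (ℓ a) {ω | ENNReal.ofReal t < Snorm S X ℓ H a ω}) ∧
      ((X a).law (ℓ a) ({ω | ENNReal.ofReal (s + t) < Snorm S X ℓ H a ω}
            ∩ {ω | Sreturn S X ℓ H s a ω ≤ ENNReal.ofReal s + betaA S X ℓ H a})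
          ≤ (X a).law (ℓ a) {ω | ENNReal.ofReal s < Snorm S X ℓ H a ω}
            * (X a).law (ℓ a)
              {ω | ENNReal.ofReal t - betaA S X ℓ H a < Snorm S X ℓ H a ω}) :=
  factorization_inequalities_general S X ℓ H
end
end

section
/- Let X be an irreducible birth-and-death chain on ⟦b,a⟧ with transition probabilities p_x, q_x and reversible invariant probability measure π. Then for all integers b ≤ n < j ≤ a: E[T_{j→n}] = Σ_{k=n+1}^{j} π(⟦k,a⟧) / ( q_k · π(k) ). -/
/-!
`E[T] = ∑ₜ P(T > t)` for the hitting time `T` of `n`. Let `G_t(y) = P(T > t, X_t = y)` (taboo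
probabilities). If `h(n) = 0` and `h = 1 + K h` on a set `D` that contains the starting point `x`
and that the chain cannot leave before hitting `n`, then one step of the chain gives
`∑_{t<s} P(T > t) + ∑_y G_s(y) h(y) = h(x)` for every `s`. Hence `∑ₜ P(T > t) ≤ h(x) < ∞`, so
`P(T > s) → 0`; if `h` is bounded on `D`, the remainder `∑_y G_s(y) h(y) ≤ (sup_D h) P(T > s)`
tends to zero as well, and `E[T] = h(x)`.

For the birth-and-death chain, `h(k) = ∑_{m=n+1}^{k} π(⟦m,a⟧) / (q_m π(m))` solves this on
`D = ⟦n+1,a⟧`: detailed balance gives `q_z (h(z) - h(z-1)) = 1 + p_z (h(z+1) - h(z))`.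
-/

open MeasureTheory Filter Topology ENNReal ProbabilityTheory

noncomputable section

/-- One-step transition probabilities of a birth-and-death chain on `ℤ` with
birth rates `p` and death rates `q` (and holding probability `1 - p x - q x`). -/
def bdStep (p q : ℤ → ℝ) (x y : ℤ) : ℝ :=
  if y = x + 1 then p x else if y = x - 1 then q x
  else if y = x then 1 - p x - q x else 0

/-- An irreducible discrete-time birth-and-death chain on the integer interval
`⟦b,a⟧`, given by its transition probabilities `p x = p(x,x+1) > 0` (for `b ≤ x ≤ a-1`),
`q x = p(x,x-1) > 0` (for `b+1 ≤ x ≤ a`), and by the laws `law x` of the chain started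
at `x` on path space `ℕ → ℤ` (characterized by the cylinder/Markov property `markov`). -/
structure BDChain (b a : ℤ) where
  p : ℤ → ℝ
  q : ℤ → ℝ
  law : ℤ → Measure (ℕ → ℤ)
  prob : ∀ x, IsProbabilityMeasure (law x)
  p_pos : ∀ x, b ≤ x → x ≤ a - 1 → 0 < p x
  q_pos : ∀ x, b + 1 ≤ x → x ≤ a → 0 < q x
  p_zero : ∀ x, x < b ∨ a ≤ x → p x = 0
  q_zero : ∀ x, x ≤ b ∨ a < x → q x = 0
  r_nonneg : ∀ x, b ≤ x → x ≤ a → p x + q x ≤ 1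
  init : ∀ x, law x {ω | ω 0 = x} = 1
  markov : ∀ (x : ℤ) (u : ℕ → ℤ) (n : ℕ),
    law x {ω | ∀ i ≤ n + 1, ω i = u i}
      = law x {ω | ∀ i ≤ n, ω i = u i} * ENNReal.ofReal (bdStep p q (u n) (u (n + 1)))

/-- Mean hitting time `E[T_{x → y}]` for the birth-and-death chain `c`. -/
def BDChain.eT {b a : ℤ} (c : BDChain b a) (x y : ℤ) : ℝ≥0∞ :=
  ∫⁻ ω, hitTime {y} ω ∂(c.law x)

/-- Mean hitting time `E[T_{x → A}]` of a set `A` for the birth-and-death chain `c`. -/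
def BDChain.eTset {b a : ℤ} (c : BDChain b a) (x : ℤ) (A : Set ℤ) : ℝ≥0∞ :=
  ∫⁻ ω, hitTime A ω ∂(c.law x)

/-- Second moment `E[T_{x → y}²]` of the hitting time. -/
def BDChain.eT2 {b a : ℤ} (c : BDChain b a) (x y : ℤ) : ℝ≥0∞ :=
  ∫⁻ ω, (hitTime {y} ω) ^ 2 ∂(c.law x)

/-- `π` is the (unique) reversible invariant probability measure of the
birth-and-death chain `c` on `⟦b,a⟧`: it is positive on `⟦b,a⟧`, vanishes outside,
has total mass one, and satisfies the reversibility (detailed balance) relation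
`π(x) q_x = π(x-1) p_{x-1}`. -/
def BDChain.IsStationary {b a : ℤ} (c : BDChain b a) (π : ℤ → ℝ) : Prop :=
  (∀ x, b ≤ x → x ≤ a → 0 < π x) ∧ (∀ x, x < b ∨ a < x → π x = 0) ∧
  (∑ x ∈ Finset.Icc b a, π x) = 1 ∧
  (∀ x, b + 1 ≤ x → x ≤ a → π x * c.q x = π (x - 1) * c.p (x - 1))

lemma tsum_measure_preimage_singleton_inter {α β : Type*} [MeasurableSpace α] [Countable β]
    (μ : Measure α) {f : α → β} (hf : ∀ b, MeasurableSet (f ⁻¹' {b})) (A : Set α) :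
    ∑' b, μ (f ⁻¹' {b} ∩ A) = μ A := by
  simp_rw [← Measure.restrict_apply (hf _)]
  rw [← measure_iUnion (fun b c hbc => Set.disjoint_singleton.mpr hbc |>.preimage f) hf,
    ← Set.preimage_iUnion, Set.iUnion_of_singleton, Set.preimage_univ,
    Measure.restrict_apply_univ]

namespace MarkovPath

section Paths

variable {S : Type*}

def cylinder (t : ℕ) (u : ℕ → S) : Set (ℕ → S) := {ω | ∀ i ≤ t, ω i = u i}

def truncate (t : ℕ) (ω : ℕ → S) : Fin (t + 1) → S := fun i => ω i

def avoidUpTo (n : S) (t : ℕ) : Set (ℕ → S) := {ω | ∀ s ≤ t, ω s ≠ n}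

lemma cylinder_eq_truncate_preimage (t : ℕ) (u : ℕ → S) :
    cylinder t u = truncate t ⁻¹' {truncate t u} := by
  ext ω
  simp only [cylinder, Set.mem_ofPred_eq, Set.mem_preimage, Set.mem_singleton_iff, funext_iff,
    truncate]
  exact ⟨fun h i => h i (Nat.lt_succ_iff.mp i.2), fun h i hi => h ⟨i, Nat.lt_succ_of_le hi⟩⟩

lemma hitTime_singleton_eq_tsum (n : S) (ω : ℕ → S) :
    hitTime {n} ω = ∑' t, (avoidUpTo n t).indicator 1 ω := by
  classical
  by_cases hhit : ∃ t, ω t = n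
  · have hfirst : hitTime {n} ω = Nat.find hhit :=
      le_antisymm (iInf₂_le (Nat.find hhit) (Nat.find_spec hhit))
        (le_iInf₂ fun t ht => Nat.cast_le.mpr (Nat.find_min' hhit ht))
    have hmem : ∀ t, ω ∈ avoidUpTo n t ↔ t < Nat.find hhit := fun t => by
      simp [avoidUpTo, Nat.lt_find_iff]
    rw [hfirst, tsum_eq_sum (s := Finset.range (Nat.find hhit)) fun t ht =>
        Set.indicator_of_notMem (by simpa [hmem] using ht) _,
      Finset.sum_congr rfl fun t ht =>
        Set.indicator_of_mem ((hmem t).mpr (Finset.mem_range.mp ht)) _]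
    simp
  · push Not at hhit
    have hnever : hitTime {n} ω = ⊤ := by
      simp [hitTime, hhit]
    rw [hnever, tsum_congr fun t => Set.indicator_of_mem (s := avoidUpTo n t) (fun s _ => hhit s) 1]
    exact (ENNReal.tsum_const_eq_top_of_ne_zero one_ne_zero).symm

lemma dependsOn_avoidUpTo_inter_eval (n : S) (t : ℕ) (z : S) :
    DependsOn (· ∈ avoidUpTo n t ∩ {ω | ω t = z}) (Set.Iic t) := by
  intro ω ω' h
  have h' : ∀ s ≤ t, ω s = ω' s := h
  simp +contextual [avoidUpTo, h']

end Paths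

variable {S : Type*} [MeasurableSpace S] {μ : Measure (ℕ → S)} {K : S → S → ℝ≥0∞} {n : S}

def IsMarkovLaw (μ : Measure (ℕ → S)) (K : S → S → ℝ≥0∞) : Prop :=
  ∀ (u : ℕ → S) (t : ℕ), μ (cylinder (t + 1) u) = μ (cylinder t u) * K (u t) (u (t + 1))

def taboo (μ : Measure (ℕ → S)) (n : S) (t : ℕ) (y : S) : ℝ≥0∞ :=
  μ (avoidUpTo n t ∩ {ω | ω t = y})

lemma IsMarkovLaw.measure_cylinder_inter_eval (hμ : IsMarkovLaw μ K) (t : ℕ) (u : ℕ → S)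
    (y : S) : μ (cylinder t u ∩ {ω | ω (t + 1) = y}) = μ (cylinder t u) * K (u t) y := by
  have hextend : cylinder t u ∩ {ω | ω (t + 1) = y}
      = cylinder (t + 1) (Function.update u (t + 1) y) := by
    ext ω
    simp only [cylinder, Set.mem_inter_iff, Set.mem_ofPred_eq]
    constructor
    · rintro ⟨h, hy⟩ i hi
      rcases Nat.lt_or_ge i (t + 1) with hlt | hge
      · rw [Function.update_of_ne (by omega)]
        exact h i (by omega)
      · obtain rfl : i = t + 1 := by omega
        simpa using hy
    · intro h
      refine ⟨fun i hi => ?_, by simpa using h (t + 1) le_rfl⟩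
      simpa [Function.update_of_ne (show i ≠ t + 1 by omega)] using h i (by omega)
  have hprefix : cylinder t (Function.update u (t + 1) y) = cylinder t u := by
    ext ω
    simp only [cylinder, Set.mem_ofPred_eq]
    refine forall₂_congr fun i hi => ?_
    rw [Function.update_of_ne (by omega)]
  rw [hextend, hμ, hprefix, Function.update_self, Function.update_of_ne (by omega)]

lemma taboo_self (μ : Measure (ℕ → S)) (n : S) (t : ℕ) : taboo μ n t n = 0 := by
  have hempty : avoidUpTo n t ∩ {ω | ω t = n} = ∅ :=
    Set.eq_empty_of_forall_notMem fun ω hω => hω.1 t le_rfl hω.2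
  rw [taboo, hempty, measure_empty]

lemma taboo_zero_self {x : S} (hxn : x ≠ n) : taboo μ n 0 x = μ {ω | ω 0 = x} := by
  rw [taboo, Set.inter_eq_right.mpr]
  intro ω hω s hs
  obtain rfl : s = 0 := Nat.le_zero.mp hs
  exact (hω : ω 0 = x) ▸ hxn

variable [MeasurableSingletonClass S]

lemma measurableSet_eval_eq (t : ℕ) (y : S) : MeasurableSet {ω : ℕ → S | ω t = y} :=
  (measurableSet_singleton y).preimage (measurable_pi_apply t)

lemma measurableSet_avoidUpTo (n : S) (t : ℕ) : MeasurableSet (avoidUpTo n t) := by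
  simp only [avoidUpTo, Set.ofPred_forall]
  exact MeasurableSet.iInter fun s => MeasurableSet.iInter fun _ =>
    (measurableSet_eval_eq s n).compl

lemma lintegral_hitTime_eq_tsum (μ : Measure (ℕ → S)) (n : S) :
    ∫⁻ ω, hitTime {n} ω ∂μ = ∑' t, μ (avoidUpTo n t) := by
  simp_rw [hitTime_singleton_eq_tsum n]
  rw [lintegral_tsum fun t => (measurable_one.indicator (measurableSet_avoidUpTo n t)).aemeasurable]
  exact tsum_congr fun t => lintegral_indicator_one (measurableSet_avoidUpTo n t)

lemma taboo_zero_of_ne [IsProbabilityMeasure μ] {x : S} (hx : μ {ω | ω 0 = x} = 1) {y : S}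
    (hy : y ≠ x) : taboo μ n 0 y = 0 := by
  have hsub : avoidUpTo n 0 ∩ {ω | ω 0 = y} ⊆ {ω | ω 0 = x}ᶜ :=
    fun ω hω hωx => hy ((hω.2 : ω 0 = y).symm.trans hωx)
  exact measure_mono_null hsub ((prob_compl_eq_zero_iff (measurableSet_eval_eq 0 x)).mpr hx)

lemma measurableSet_truncate_preimage (t : ℕ) (v : Fin (t + 1) → S) :
    MeasurableSet (truncate t ⁻¹' {v}) :=
  (measurable_pi_lambda (truncate t) fun i => measurable_pi_apply (i : ℕ))
    (measurableSet_singleton v)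

variable [Countable S]

lemma IsMarkovLaw.measure_inter_eval_succ (hμ : IsMarkovLaw μ K) {t : ℕ}
    {E : Set (ℕ → S)} (hE : DependsOn (· ∈ E) (Set.Iic t)) {z : S} (hEz : E ⊆ {ω | ω t = z})
    (y : S) : μ (E ∩ {ω | ω (t + 1) = y}) = μ E * K z y := by
  have hpiece : ∀ v, μ (truncate t ⁻¹' {v} ∩ (E ∩ {ω | ω (t + 1) = y}))
      = μ (truncate t ⁻¹' {v} ∩ E) * K z y := by
    intro v
    rw [← Set.inter_assoc]
    obtain hempty | ⟨ω₀, hv, hω₀⟩ := (truncate t ⁻¹' {v} ∩ E).eq_empty_or_nonempty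
    · simp [hempty]
    -- the nonempty pieces of `E` are cylinders
    have hcyl : truncate t ⁻¹' {v} ∩ E = cylinder t ω₀ := by
      rw [cylinder_eq_truncate_preimage, show truncate t ω₀ = v from hv, Set.inter_eq_left]
      intro ω hω
      have hω' : ω ∈ cylinder t ω₀ := by rwa [cylinder_eq_truncate_preimage, hv]
      exact (hE fun i hi => (hω' i hi).symm).mp hω₀
    rw [hcyl, hμ.measure_cylinder_inter_eval, hEz hω₀]
  calc μ (E ∩ {ω | ω (t + 1) = y})
      = ∑' v, μ (truncate t ⁻¹' {v} ∩ (E ∩ {ω | ω (t + 1) = y})) :=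
        (tsum_measure_preimage_singleton_inter μ (measurableSet_truncate_preimage t) _).symm
    _ = (∑' v, μ (truncate t ⁻¹' {v} ∩ E)) * K z y := by
        rw [← ENNReal.tsum_mul_right]
        exact tsum_congr hpiece
    _ = μ E * K z y := by
        rw [tsum_measure_preimage_singleton_inter μ (measurableSet_truncate_preimage t)]

lemma tsum_taboo (μ : Measure (ℕ → S)) (n : S) (t : ℕ) :
    ∑' y, taboo μ n t y = μ (avoidUpTo n t) := by
  rw [← tsum_measure_preimage_singleton_inter μ (measurableSet_eval_eq t)]
  exact tsum_congr fun y => by rw [taboo, Set.inter_comm]; rfl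

lemma IsMarkovLaw.taboo_succ (hμ : IsMarkovLaw μ K) (t : ℕ) {y : S}
    (hy : y ≠ n) : taboo μ n (t + 1) y = ∑' z, taboo μ n t z * K z y := by
  have hlast : avoidUpTo n (t + 1) ∩ {ω | ω (t + 1) = y} = avoidUpTo n t ∩ {ω | ω (t + 1) = y} := by
    ext ω
    simp only [avoidUpTo, Set.mem_inter_iff, Set.mem_ofPred_eq]
    refine ⟨fun h => ⟨fun s hs => h.1 s (by omega), h.2⟩, fun h => ⟨fun s hs => ?_, h.2⟩⟩
    rcases Nat.lt_or_ge s (t + 1) with hlt | hge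
    · exact h.1 s (by omega)
    · obtain rfl : s = t + 1 := by omega
      exact h.2 ▸ hy
  rw [taboo, hlast, ← tsum_measure_preimage_singleton_inter μ (measurableSet_eval_eq t)]
  refine tsum_congr fun z => ?_
  rw [taboo, ← hμ.measure_inter_eval_succ (dependsOn_avoidUpTo_inter_eval n t z)
    Set.inter_subset_right]
  congr 1
  ext ω
  simp only [Set.mem_inter_iff, Set.mem_preimage, Set.mem_singleton_iff, Set.mem_ofPred_eq]
  tauto

variable {D : Set S} {h : S → ℝ≥0∞}

lemma IsMarkovLaw.tsum_taboo_mul_eq (hμ : IsMarkovLaw μ K)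
    (hh : ∀ z ∈ D, h z = 1 + ∑' y, K z y * h y) (hn : h n = 0) {t : ℕ}
    (hsupp : ∀ z ∉ D, taboo μ n t z = 0) :
    ∑' z, taboo μ n t z * h z = μ (avoidUpTo n t) + ∑' y, taboo μ n (t + 1) y * h y := by
  have hnext : ∀ y, taboo μ n (t + 1) y * h y = ∑' z, taboo μ n t z * (K z y * h y) := by
    intro y
    by_cases hyn : y = n
    · simp [hyn, hn]
    · rw [hμ.taboo_succ t hyn, ← ENNReal.tsum_mul_right]
      simp_rw [mul_assoc]
  have hcur : ∀ z, taboo μ n t z * h z = taboo μ n t z + taboo μ n t z * ∑' y, K z y * h y := by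
    intro z
    by_cases hz : z ∈ D
    · rw [hh z hz, mul_add, mul_one]
    · simp [hsupp z hz]
  simp_rw [hnext, hcur]
  rw [ENNReal.tsum_add, tsum_taboo, ENNReal.tsum_comm]
  simp_rw [ENNReal.tsum_mul_left]

variable [IsProbabilityMeasure μ] {x : S}

lemma IsMarkovLaw.taboo_eq_zero_of_notMem (hμ : IsMarkovLaw μ K)
    (hx : μ {ω | ω 0 = x} = 1) (hxD : x ∈ D) (hD : ∀ z ∈ D, ∀ y, y ≠ n → K z y ≠ 0 → y ∈ D)
    (t : ℕ) {y : S} (hy : y ∉ D) :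
    taboo μ n t y = 0 := by
  induction t generalizing y with
  | zero => exact taboo_zero_of_ne hx (ne_of_mem_of_not_mem hxD hy).symm
  | succ t ih =>
    by_cases hyn : y = n
    · exact hyn ▸ taboo_self μ n (t + 1)
    rw [hμ.taboo_succ t hyn, ENNReal.tsum_eq_zero]
    intro z
    by_cases hz : z ∈ D
    · rw [not_imp_comm.mp (hD z hz y hyn) hy, mul_zero]
    · rw [ih hz, zero_mul]

lemma IsMarkovLaw.sum_survival_add_tsum_taboo_mul (hμ : IsMarkovLaw μ K)
    (hx : μ {ω | ω 0 = x} = 1) (hxD : x ∈ D) (hD : ∀ z ∈ D, ∀ y, y ≠ n → K z y ≠ 0 → y ∈ D)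
    (hh : ∀ z ∈ D, h z = 1 + ∑' y, K z y * h y) (hn : h n = 0) (T : ℕ) :
    ∑ t ∈ Finset.range T, μ (avoidUpTo n t) + ∑' y, taboo μ n T y * h y = h x := by
  induction T with
  | zero =>
    rw [Finset.sum_range_zero, zero_add,
      tsum_eq_single x fun y hy => by rw [taboo_zero_of_ne hx hy, zero_mul]]
    by_cases hxn : x = n
    · rw [hxn, hn, mul_zero]
    · rw [taboo_zero_self hxn, hx, one_mul]
  | succ T ih =>
    rw [Finset.sum_range_succ, add_assoc,
      ← hμ.tsum_taboo_mul_eq hh hn fun z hz => hμ.taboo_eq_zero_of_notMem hx hxD hD T hz, ih]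

theorem IsMarkovLaw.lintegral_hitTime_eq (hμ : IsMarkovLaw μ K)
    (hx : μ {ω | ω 0 = x} = 1) (hxD : x ∈ D) (hD : ∀ z ∈ D, ∀ y, y ≠ n → K z y ≠ 0 → y ∈ D)
    (hh : ∀ z ∈ D, h z = 1 + ∑' y, K z y * h y) (hn : h n = 0) {M : ℝ≥0∞}
    (hM : ∀ z ∈ D, h z ≤ M) (hM_top : M ≠ ⊤) :
    ∫⁻ ω, hitTime {n} ω ∂μ = h x := by
  have hpartial := hμ.sum_survival_add_tsum_taboo_mul hx hxD hD hh hn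
  have hsum_ne_top : ∑' t, μ (avoidUpTo n t) ≠ ⊤ :=
    ne_top_of_le_ne_top (ne_top_of_le_ne_top hM_top (hM x hxD))
      (ENNReal.tsum_le_of_sum_range_le fun T => le_self_add.trans (hpartial T).le)
  have hrest_le : ∀ T, ∑' y, taboo μ n T y * h y ≤ M * μ (avoidUpTo n T) := by
    intro T
    calc ∑' y, taboo μ n T y * h y ≤ ∑' y, taboo μ n T y * M := by
          refine ENNReal.tsum_le_tsum fun y => ?_
          by_cases hy : y ∈ D
          · exact mul_le_mul_right (hM y hy) _
          · rw [hμ.taboo_eq_zero_of_notMem hx hxD hD T hy, zero_mul, zero_mul]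
      _ = M * μ (avoidUpTo n T) := by rw [ENNReal.tsum_mul_right, tsum_taboo, mul_comm]
  have hrest : Tendsto (fun T => ∑' y, taboo μ n T y * h y) atTop (𝓝 0) := by
    have hM_surv := ENNReal.Tendsto.const_mul
      (ENNReal.tendsto_atTop_zero_of_tsum_ne_top hsum_ne_top) (Or.inr hM_top)
    rw [mul_zero] at hM_surv
    exact tendsto_of_tendsto_of_tendsto_of_le_of_le tendsto_const_nhds hM_surv
      (fun _ => zero_le) hrest_le
  have hlim := (ENNReal.tendsto_nat_tsum fun t => μ (avoidUpTo n t)).add hrest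
  simp only [hpartial, add_zero] at hlim
  rw [lintegral_hitTime_eq_tsum]
  exact tendsto_nhds_unique tendsto_const_nhds hlim |>.symm

end MarkovPath

lemma tsum_ofReal_bdStep_mul (p q : ℤ → ℝ) (z : ℤ) (f : ℤ → ℝ≥0∞) :
    ∑' y, ENNReal.ofReal (bdStep p q z y) * f y
      = ENNReal.ofReal (q z) * f (z - 1) + ENNReal.ofReal (1 - p z - q z) * f z
        + ENNReal.ofReal (p z) * f (z + 1) := by
  have h1 : z - 1 ≠ z + 1 := by omega
  have h2 : z ≠ z + 1 := by omega
  have h3 : z ≠ z - 1 := by omega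
  rw [tsum_eq_sum (s := {z - 1, z, z + 1}) fun y hy => ?_]
  · rw [Finset.sum_insert (by simp [h1, h3.symm]), Finset.sum_insert (by simp [h2]),
      Finset.sum_singleton, ← add_assoc]
    simp [bdStep, h1, h2, h3]
  · simp only [Finset.mem_insert, Finset.mem_singleton, not_or] at hy
    simp [bdStep, hy.1, hy.2.1, hy.2.2]

namespace BDChain

variable {b a : ℤ} (c : BDChain b a)

lemma p_nonneg (x : ℤ) : 0 ≤ c.p x := by
  by_cases hx : x < b ∨ a ≤ x
  · exact (c.p_zero x hx).ge
  · exact (c.p_pos x (by omega) (by omega)).le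

lemma q_nonneg (x : ℤ) : 0 ≤ c.q x := by
  by_cases hx : x ≤ b ∨ a < x
  · exact (c.q_zero x hx).ge
  · exact (c.q_pos x (by omega) (by omega)).le

lemma isMarkovLaw (x : ℤ) :
    MarkovPath.IsMarkovLaw (c.law x) fun y z => ENNReal.ofReal (bdStep c.p c.q y z) :=
  c.markov x

lemma mem_Icc_of_bdStep_ne_zero {n z y : ℤ} (hz : z ∈ Set.Icc (n + 1) a) (hy : y ≠ n)
    (hstep : ENNReal.ofReal (bdStep c.p c.q z y) ≠ 0) : y ∈ Set.Icc (n + 1) a := by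
  obtain ⟨hnz, hza⟩ := hz
  unfold bdStep at hstep
  split_ifs at hstep with hup hdown hstay
  · have hz_lt : z < a := by
      by_contra hza'
      exact hstep (by rw [c.p_zero z (Or.inr (not_lt.mp hza')), ENNReal.ofReal_zero])
    exact ⟨by omega, by omega⟩
  · exact ⟨by omega, by omega⟩
  · exact ⟨by omega, by omega⟩
  · exact absurd ENNReal.ofReal_zero hstep

variable {π : ℤ → ℝ}

variable {c} in
lemma IsStationary.nonneg (hπ : c.IsStationary π) (x : ℤ) : 0 ≤ π x := by
  by_cases hx : x < b ∨ a < x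
  · exact (hπ.2.1 x hx).ge
  · exact (hπ.1 x (by omega) (by omega)).le

variable (π) in
def meanStepDownTime (m : ℤ) : ℝ := (∑ i ∈ Finset.Icc m a, π i) / (c.q m * π m)

variable (π) in
def meanDescentTime (n k : ℤ) : ℝ := ∑ m ∈ Finset.Icc (n + 1) k, c.meanStepDownTime π m

lemma meanStepDownTime_nonneg (hπ : c.IsStationary π) (m : ℤ) : 0 ≤ c.meanStepDownTime π m :=
  div_nonneg (Finset.sum_nonneg fun i _ => hπ.nonneg i)
    (mul_nonneg (c.q_nonneg m) (hπ.nonneg m))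

lemma q_mul_meanStepDownTime (hπ : c.IsStationary π) {z : ℤ} (hbz : b + 1 ≤ z) (hza : z ≤ a) :
    c.q z * c.meanStepDownTime π z = 1 + c.p z * c.meanStepDownTime π (z + 1) := by
  obtain ⟨hpos, -, -, hbalance⟩ := hπ
  have hq : c.q z ≠ 0 := (c.q_pos z hbz hza).ne'
  have hπz : π z ≠ 0 := (hpos z (by omega) hza).ne'
  have htail : ∑ i ∈ Finset.Icc z a, π i = π z + ∑ i ∈ Finset.Icc (z + 1) a, π i := by
    rw [← Finset.insert_Icc_add_one_left_eq_Icc hza, Finset.sum_insert (by simp)]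
  -- detailed balance `π (z+1) q (z+1) = π z p z`; for `z = a` both sides vanish
  have hup : c.p z * c.meanStepDownTime π (z + 1) = (∑ i ∈ Finset.Icc (z + 1) a, π i) / π z := by
    rcases hza.lt_or_eq with hlt | rfl
    · have hbal := hbalance (z + 1) (by omega) (by omega)
      rw [add_sub_cancel_right] at hbal
      have hp : c.p z ≠ 0 := (c.p_pos z (by omega) (by omega)).ne'
      rw [meanStepDownTime, mul_comm (c.q _), hbal]
      field_simp
    · simp [meanStepDownTime]
  rw [hup, meanStepDownTime, htail]
  field_simp

lemma meanDescentTime_self (n : ℤ) : c.meanDescentTime π n n = 0 := by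
  simp [meanDescentTime]

lemma meanDescentTime_succ {n k : ℤ} (hnk : n ≤ k) :
    c.meanDescentTime π n (k + 1) = c.meanDescentTime π n k + c.meanStepDownTime π (k + 1) := by
  rw [meanDescentTime, ← Finset.insert_Icc_right_eq_Icc_add_one (by omega),
    Finset.sum_insert (by simp), add_comm, meanDescentTime]

lemma meanDescentTime_nonneg (hπ : c.IsStationary π) (n k : ℤ) : 0 ≤ c.meanDescentTime π n k :=
  Finset.sum_nonneg fun m _ => c.meanStepDownTime_nonneg hπ m

lemma meanDescentTime_mono (hπ : c.IsStationary π) (n : ℤ) {k k' : ℤ} (hkk' : k ≤ k') :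
    c.meanDescentTime π n k ≤ c.meanDescentTime π n k' :=
  Finset.sum_le_sum_of_subset_of_nonneg (Finset.Icc_subset_Icc_right hkk')
    fun m _ _ => c.meanStepDownTime_nonneg hπ m

lemma meanDescentTime_eq_one_add (hπ : c.IsStationary π) {n z : ℤ} (hn : b ≤ n)
    (hnz : n + 1 ≤ z) (hza : z ≤ a) :
    c.meanDescentTime π n z = 1 + (c.q z * c.meanDescentTime π n (z - 1)
      + (1 - c.p z - c.q z) * c.meanDescentTime π n z
      + c.p z * c.meanDescentTime π n (z + 1)) := by
  have hdown :
      c.meanDescentTime π n z = c.meanDescentTime π n (z - 1) + c.meanStepDownTime π z := by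
    simpa using c.meanDescentTime_succ (k := z - 1) (by omega)
  have hup := c.meanDescentTime_succ (π := π) (n := n) (k := z) (by omega)
  linear_combination c.q z * hdown - c.p z * hup + c.q_mul_meanStepDownTime hπ (by omega) hza

lemma ofReal_meanDescentTime_eq (hπ : c.IsStationary π) {n z : ℤ} (hn : b ≤ n)
    (hz : z ∈ Set.Icc (n + 1) a) :
    ENNReal.ofReal (c.meanDescentTime π n z) = 1 + ∑' y, ENNReal.ofReal (bdStep c.p c.q z y)
      * ENNReal.ofReal (c.meanDescentTime π n y) := by
  obtain ⟨hnz, hza⟩ := hz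
  have hnn := c.meanDescentTime_nonneg hπ n
  have hr : 0 ≤ 1 - c.p z - c.q z := by linarith [c.r_nonneg z (by omega) hza]
  have hdown := mul_nonneg (c.q_nonneg z) (hnn (z - 1))
  have hstay := mul_nonneg hr (hnn z)
  have hup := mul_nonneg (c.p_nonneg z) (hnn (z + 1))
  rw [tsum_ofReal_bdStep_mul, ← ENNReal.ofReal_mul (c.q_nonneg z), ← ENNReal.ofReal_mul hr,
    ← ENNReal.ofReal_mul (c.p_nonneg z), ← ENNReal.ofReal_add, ← ENNReal.ofReal_add,
    ← ENNReal.ofReal_one, ← ENNReal.ofReal_add, ← c.meanDescentTime_eq_one_add hπ hn hnz hza]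
  all_goals linarith

end BDChain

theorem mean_hitting_time_down_general {b a : ℤ} (c : BDChain b a)
    (π : ℤ → ℝ) (hπ : c.IsStationary π)
    (n j : ℤ) (hn : b ≤ n) (hnj : n < j) (hj : j ≤ a) :
    c.eT j n = ENNReal.ofReal
      (∑ k ∈ Finset.Icc (n + 1) j, (∑ i ∈ Finset.Icc k a, π i) / (c.q k * π k)) := by
  have := c.prob j
  exact (c.isMarkovLaw j).lintegral_hitTime_eq (c.init j) (D := Set.Icc (n + 1) a) ⟨hnj, hj⟩
    (fun _ hz _ => c.mem_Icc_of_bdStep_ne_zero hz)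
    (fun _ hz => c.ofReal_meanDescentTime_eq hπ hn hz)
    (by rw [c.meanDescentTime_self, ENNReal.ofReal_zero])
    (fun _ hz => ENNReal.ofReal_le_ofReal (c.meanDescentTime_mono hπ n hz.2)) ENNReal.ofReal_ne_top

/-- For an irreducible birth-and-death chain on `⟦b,a⟧` with
reversible invariant probability measure `π`, for all `b ≤ n < j ≤ a`:
`E[T_{j→n}] = Σ_{k=n+1}^{j} π(⟦k,a⟧) / (q_k π(k))`. -/
theorem mean_hitting_time_down {b a : ℤ} (hab : b < a) (c : BDChain b a)
    (π : ℤ → ℝ) (hπ : c.IsStationary π)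
    (n j : ℤ) (hn : b ≤ n) (hnj : n < j) (hj : j ≤ a) :
    c.eT j n = ENNReal.ofReal
      (∑ k ∈ Finset.Icc (n + 1) j, (∑ i ∈ Finset.Icc k a, π i) / (c.q k * π k)) :=
  mean_hitting_time_down_general c π hπ n j hn hnj hj
end
end
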